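/- arXiv:2311.07368 — 4 statements merged into one kernel-verified Lean document; each statement's English description precedes it below -/
import Mathlib

section
/- Let A ∈ GL(d,ℝ) be expansive, let Q ⊆ ℝ^d be open with compact closure contained in ℝ^d \ {0}, and let Q₀ ⊆ ℝ^d be open and relatively compact. Define Q_i := A^i Q for i ≥ 1 and Q_0 := Q₀. Then there exists M ∈ ℕ such that for all i, ℓ ∈ ℕ₀: if Q_i ∩ Q_ℓ ≠ ∅ then |i − ℓ| ≤ M. -/
open Matrix Filter Topology

lemma aux_tendsto_norm_pow {𝔸 : Type*} [NormedRing 𝔸] [NormedAlgebra ℂ 𝔸] [CompleteSpace 𝔸]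
    (a : 𝔸) (h : spectralRadius ℂ a < 1) :
    Tendsto (fun n : ℕ => ‖a ^ n‖) atTop (𝓝 0) := by
  obtain ⟨r, hr1, hr2⟩ := exists_between h
  lift r to NNReal using (hr2.trans ENNReal.one_lt_top).ne
  have hr2' : r < 1 := by exact_mod_cast hr2
  have hge := spectrum.pow_nnnorm_pow_one_div_tendsto_nhds_spectralRadius a
  have hev : ∀ᶠ n : ℕ in atTop, (‖a ^ n‖₊ : ENNReal) ^ (1 / (n : ℝ)) < r :=
    hge.eventually_lt_const hr1
  have hbd : ∀ᶠ n : ℕ in atTop, ‖a ^ n‖ ≤ (r : ℝ) ^ n := by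
    filter_upwards [hev, eventually_ge_atTop 1] with n hn hn1
    have hne : (n : ℝ) ≠ 0 := by positivity
    have h2 : ((‖a ^ n‖₊ : ENNReal) ^ (1 / (n : ℝ))) ^ (n : ℝ) ≤ (r : ENNReal) ^ (n : ℝ) :=
      ENNReal.rpow_le_rpow hn.le (by positivity)
    rw [← ENNReal.rpow_mul, one_div_mul_cancel hne, ENNReal.rpow_one,
      ENNReal.rpow_natCast] at h2
    have h3 : ‖a ^ n‖₊ ≤ r ^ n := by exact_mod_cast h2
    calc ‖a ^ n‖ = (‖a ^ n‖₊ : ℝ) := rfl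
    _ ≤ ((r ^ n : NNReal) : ℝ) := by exact_mod_cast h3
    _ = (r : ℝ) ^ n := by push_cast; ring
  exact squeeze_zero' (Eventually.of_forall fun n => norm_nonneg _) hbd
    (tendsto_pow_atTop_nhds_zero_of_lt_one r.coe_nonneg (by exact_mod_cast hr2'))

/-- A real matrix is expansive if all its complex eigenvalues have absolute value `> 1`. -/
def Expansive {d : ℕ} (A : Matrix (Fin d) (Fin d) ℝ) : Prop :=
  ∀ μ ∈ spectrum ℂ (A.map (algebraMap ℝ ℂ)), 1 < ‖μ‖

theorem stmt1 {d : ℕ} (A : Matrix (Fin d) (Fin d) ℝ) (hA : IsUnit A) (hexp : Expansive A)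
    (Q Q0 : Set (EuclideanSpace ℝ (Fin d)))
    (hQopen : IsOpen Q) (hQcpt : IsCompact (closure Q))
    (h0 : (0 : EuclideanSpace ℝ (Fin d)) ∉ closure Q)
    (hQ0open : IsOpen Q0) (hQ0cpt : IsCompact (closure Q0))
    (Qi : ℕ → Set (EuclideanSpace ℝ (Fin d)))
    (hQi0 : Qi 0 = Q0)
    (hQi : ∀ i : ℕ, 0 < i →
      Qi i = (fun x => (WithLp.toLp 2 ((A ^ i).mulVec (WithLp.ofLp x)) : EuclideanSpace ℝ (Fin d))) '' Q) :
    ∃ M : ℕ, ∀ i ℓ : ℕ, (Qi i ∩ Qi ℓ).Nonempty → ((i : ℤ) - ℓ).natAbs ≤ M := by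
  -- Set up the complex matrix and its inverse
  set A' : Matrix (Fin d) (Fin d) ℂ := A.map (algebraMap ℝ ℂ) with hA'
  have hAu' : IsUnit A' := by
    have := hA.map ((algebraMap ℝ ℂ).mapMatrix)
    rwa [RingHom.mapMatrix_apply] at this
  set u := hAu'.unit with hu
  set B : Matrix (Fin d) (Fin d) ℂ := ↑u⁻¹ with hB
  have hspec : ∀ μ ∈ spectrum ℂ B, ‖μ‖₊ < 1 := by
    intro μ hμ
    rw [hB, ← spectrum.map_inv, Set.mem_inv] at hμ
    have h1 : 1 < ‖μ⁻¹‖ := hexp μ⁻¹ (by rwa [hAu'.unit_spec] at hμ)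
    rw [norm_inv] at h1
    have habs : ‖μ‖ < 1 := by
      rcases lt_or_ge ‖μ‖ 1 with h | h
      · exact h
      · exfalso
        have := (one_lt_inv_iff₀ (a := ‖μ‖)).mp h1
        linarith [this.2]
    rw [← NNReal.coe_lt_coe]
    simpa using habs
  set T := Matrix.toEuclideanCLM (𝕜 := ℂ) B with hT
  have hrad : spectralRadius ℂ T < 1 := by
    have hsT : spectrum ℂ T = spectrum ℂ B := AlgEquiv.spectrum_eq _ B
    rcases Set.eq_empty_or_nonempty (spectrum ℂ T) with he | hne
    · rw [spectralRadius, he]; simp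
    · simpa using spectrum.spectralRadius_lt_of_forall_lt_of_nonempty hne
        (r := 1) (fun k hk => hspec k (hsT ▸ hk))
  have htend : Tendsto (fun n : ℕ => ‖T ^ n‖) atTop (𝓝 0) := aux_tendsto_norm_pow T hrad
  -- Key inequality: ‖x‖ ≤ ‖T^n‖ * ‖A^n x‖
  have key : ∀ (n : ℕ) (x y : EuclideanSpace ℝ (Fin d)), y = (A ^ n).mulVec x →
      ‖x‖ ≤ ‖T ^ n‖ * ‖y‖ := by
    intro n x y hy
    set zmap : (Fin d → ℝ) → EuclideanSpace ℂ (Fin d) :=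
      fun v => (WithLp.equiv 2 _).symm (fun j => (v j : ℂ)) with hzmap
    have hnorm : ∀ v : EuclideanSpace ℝ (Fin d), ‖zmap v‖ = ‖v‖ := by
      intro v
      rw [EuclideanSpace.norm_eq, EuclideanSpace.norm_eq]
      congr 1
      apply Finset.sum_congr rfl
      intro j _
      simp [hzmap, Complex.norm_real]
    have hmapow : (A ^ n).map (algebraMap ℝ ℂ) = A' ^ n := by
      rw [hA', ← RingHom.mapMatrix_apply, ← RingHom.mapMatrix_apply, map_pow]
    have hBA : B ^ n * A' ^ n = 1 := by
      rw [hB, ← (show (↑u : Matrix (Fin d) (Fin d) ℂ) = A' from hAu'.unit_spec),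
        ← Units.val_pow_eq_pow_val, ← Units.val_pow_eq_pow_val, ← Units.val_mul,
        inv_pow, inv_mul_cancel, Units.val_one]
    have hz : (T ^ n) (zmap y) = zmap x := by
      rw [hT, ← map_pow, hzmap]
      simp only [WithLp.equiv_symm_apply, Matrix.toEuclideanCLM_toLp]
      congr 1
      have hc : (fun j => (((y : Fin d → ℝ)) j : ℂ))
          = (A' ^ n).mulVec (fun j => ((x j : ℝ) : ℂ)) := by
        funext j
        rw [hy]
        rw [show ((((A ^ n).mulVec x) j : ℝ) : ℂ) = algebraMap ℝ ℂ (((A ^ n).mulVec x) j)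
          from rfl, RingHom.map_mulVec, hmapow]
        rfl
      rw [hc, Matrix.mulVec_mulVec, hBA, Matrix.one_mulVec]
    calc ‖x‖ = ‖zmap x‖ := (hnorm x).symm
    _ = ‖(T ^ n) (zmap y)‖ := by rw [hz]
    _ ≤ ‖T ^ n‖ * ‖zmap y‖ := (T ^ n).le_opNorm _
    _ = ‖T ^ n‖ * ‖y‖ := by rw [hnorm]
  -- lower bound ε on Q
  obtain ⟨ε, hε, hball⟩ := Metric.isOpen_iff.mp isClosed_closure.isOpen_compl 0 h0
  have hεQ : ∀ y ∈ closure Q, ε ≤ ‖y‖ := by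
    intro y hy
    by_contra h
    push_neg at h
    exact hball (by simpa [Metric.mem_ball, dist_zero_right] using h) hy
  -- upper bound R on Q and Q0
  obtain ⟨R1, hR1⟩ := hQcpt.isBounded.exists_norm_le
  obtain ⟨R2, hR2⟩ := hQ0cpt.isBounded.exists_norm_le
  set R : ℝ := max (max R1 R2) 1 with hRdef
  have hR : 0 < R := lt_of_lt_of_le one_pos (le_max_right _ _)
  have hRQ : ∀ y ∈ closure Q, ‖y‖ ≤ R :=
    fun y hy => (hR1 y hy).trans ((le_max_left _ _).trans (le_max_left _ _))
  have hRQ0 : ∀ y ∈ closure Q0, ‖y‖ ≤ R :=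
    fun y hy => (hR2 y hy).trans ((le_max_right _ _).trans (le_max_left _ _))
  -- choose N
  obtain ⟨N, hN⟩ := eventually_atTop.mp (htend.eventually_lt_const (by positivity : (0:ℝ) < ε / R))
  -- the contradiction lemma
  have habs : ∀ k, N ≤ k → ∀ q' ∈ Q, ∀ p : EuclideanSpace ℝ (Fin d), ‖p‖ ≤ R →
      p = (A ^ k).mulVec q' → False := by
    intro k hk q' hq' p hp hpe
    have h1 : ε ≤ ‖q'‖ := hεQ q' (subset_closure hq')
    have h2 : ‖q'‖ ≤ ‖T ^ k‖ * ‖p‖ := key k q' p hpe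
    have h3 : ‖T ^ k‖ < ε / R := hN k hk
    have h4 : (0:ℝ) ≤ ‖T ^ k‖ := norm_nonneg _
    have h5 : (0:ℝ) ≤ ‖p‖ := norm_nonneg _
    have h6 : ‖T ^ k‖ * ‖p‖ ≤ ‖T ^ k‖ * R := mul_le_mul_of_nonneg_left hp h4
    have h7 : ‖T ^ k‖ * R < (ε / R) * R := mul_lt_mul_of_pos_right h3 hR
    have h8 : (ε / R) * R = ε := div_mul_cancel₀ ε hR.ne'
    linarith
  refine ⟨N, ?_⟩
  have hmain : ∀ i ℓ : ℕ, i ≤ ℓ → (Qi i ∩ Qi ℓ).Nonempty → ℓ - i ≤ N := by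
    intro i ℓ hil ⟨y, hyi, hyl⟩
    by_contra hcon
    push_neg at hcon
    have hl1 : 0 < ℓ := by omega
    rw [hQi ℓ hl1] at hyl
    obtain ⟨q', hq', hq'e⟩ := hyl
    have hq'e' : y = (A ^ ℓ).mulVec q' := congrArg WithLp.ofLp hq'e.symm
    rcases Nat.eq_zero_or_pos i with hi0 | hi
    · rw [hi0, hQi0] at hyi
      exact habs ℓ (by omega) q' hq' y (hRQ0 y (subset_closure hyi)) hq'e'
    · rw [hQi i hi] at hyi
      obtain ⟨q, hq, hqe⟩ := hyi
      have hqe' : (A ^ i).mulVec q = WithLp.ofLp y := congrArg WithLp.ofLp hqe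
      obtain ⟨w, hw⟩ := hA.pow i
      have hinv : ∀ v : Fin d → ℝ,
          (↑w⁻¹ : Matrix (Fin d) (Fin d) ℝ).mulVec ((A ^ i).mulVec v) = v := by
        intro v
        rw [Matrix.mulVec_mulVec, ← hw, ← Units.val_mul, inv_mul_cancel,
          Units.val_one, Matrix.one_mulVec]
      have hAi : (A ^ ℓ) = A ^ i * A ^ (ℓ - i) := by
        rw [← pow_add]
        congr 1
        omega
      have heq : (A ^ i).mulVec q = (A ^ i).mulVec ((A ^ (ℓ - i)).mulVec q') := by
        rw [Matrix.mulVec_mulVec, ← hAi, hqe', hq'e']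
      have hcancel : WithLp.ofLp q = (A ^ (ℓ - i)).mulVec q' := by
        have := congrArg (fun v => (↑w⁻¹ : Matrix (Fin d) (Fin d) ℝ).mulVec v) heq
        simpa only [hinv] using this
      exact habs (ℓ - i) (by omega) q' hq' q (hRQ q (subset_closure hq)) hcancel
  intro i ℓ hne
  rcases le_total i ℓ with h | h
  · have := hmain i ℓ h hne
    omega
  · have := hmain ℓ i h ⟨hne.choose, hne.choose_spec.2, hne.choose_spec.1⟩
    omega
end

section
/- Let s, d ∈ ℕ and let e₁ ∈ ℝ^d denote the first standard basis vector. Then there exists a bounded measurable function f : ℝ^d → ℂ such that f(x) = 1 for x in the open Euclidean ball B(¾e₁, ¼), f(x) = 0 for x outside B(0, ½) ∪ B(¾e₁, ¼), and ∫_{ℝ^d} f(x)·x^σ dx = 0 for every multi-index σ ∈ ℕ₀^d with |σ| ≤ s. -/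
open MeasureTheory

lemma mom_scale {d : ℕ} (c : EuclideanSpace ℝ (Fin d)) (r : ℝ) (σ : Fin d → ℕ) (t : ℝ)
    (ht : 0 < t) :
    (∫ x : EuclideanSpace ℝ (Fin d),
        Set.indicator (Metric.ball (t • c) (t * r)) (fun y => ∏ i, ((y i : ℝ) : ℂ) ^ σ i) x)
      = (t ^ (d + ∑ i, σ i) : ℝ) •
        ∫ x : EuclideanSpace ℝ (Fin d),
          Set.indicator (Metric.ball c r) (fun y => ∏ i, ((y i : ℝ) : ℂ) ^ σ i) x := by
  set F : EuclideanSpace ℝ (Fin d) → ℂ :=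
    Set.indicator (Metric.ball c r) (fun y => ∏ i, ((t * y i : ℝ) : ℂ) ^ σ i) with hF
  have key : ∀ x : EuclideanSpace ℝ (Fin d),
      Set.indicator (Metric.ball (t • c) (t * r)) (fun y => ∏ i, ((y i : ℝ) : ℂ) ^ σ i) x
        = F (t⁻¹ • x) := by
    intro x
    have hmem : t⁻¹ • x ∈ Metric.ball c r ↔ x ∈ Metric.ball (t • c) (t * r) := by
      simp only [Metric.mem_ball, dist_eq_norm]
      have : t⁻¹ • x - c = t⁻¹ • (x - t • c) := by
        rw [smul_sub, smul_smul, inv_mul_cancel₀ ht.ne', one_smul]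
      rw [this, norm_smul, Real.norm_eq_abs, abs_of_pos (inv_pos.2 ht)]
      rw [inv_mul_lt_iff₀ ht]
    have hval : ∀ i, (t * ((t⁻¹ • x : EuclideanSpace ℝ (Fin d)) i) : ℝ) = x i := by
      intro i
      have : (t⁻¹ • x : EuclideanSpace ℝ (Fin d)) i = t⁻¹ * x i := rfl
      rw [this, ← mul_assoc, mul_inv_cancel₀ ht.ne', one_mul]
    by_cases hx : x ∈ Metric.ball (t • c) (t * r)
    · rw [Set.indicator_of_mem hx, hF, Set.indicator_of_mem (hmem.2 hx)]
      refine Finset.prod_congr rfl fun i _ => ?_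
      rw [show ((t⁻¹ • x : EuclideanSpace ℝ (Fin d)) i) = t⁻¹ * x i from rfl]
      push_cast
      rw [← mul_assoc, mul_inv_cancel₀ (by exact_mod_cast ht.ne' : (t:ℂ) ≠ 0), one_mul]
    · rw [Set.indicator_of_notMem hx, hF, Set.indicator_of_notMem (fun h => hx (hmem.1 h))]
  calc
    (∫ x : EuclideanSpace ℝ (Fin d),
        Set.indicator (Metric.ball (t • c) (t * r)) (fun y => ∏ i, ((y i : ℝ) : ℂ) ^ σ i) x)
        = ∫ x, F (t⁻¹ • x) := by simp_rw [key]
    _ = (t ^ Module.finrank ℝ (EuclideanSpace ℝ (Fin d))) • ∫ x, F x :=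
        Measure.integral_comp_inv_smul_of_nonneg volume F ht.le
    _ = (t ^ d : ℝ) • ∫ x, F x := by rw [finrank_euclideanSpace_fin]
    _ = (t ^ (d + ∑ i, σ i) : ℝ) •
        ∫ x : EuclideanSpace ℝ (Fin d),
          Set.indicator (Metric.ball c r) (fun y => ∏ i, ((y i : ℝ) : ℂ) ^ σ i) x := by
      have : F = fun y => (t ^ (∑ i, σ i) : ℝ) •
          Set.indicator (Metric.ball c r) (fun y => ∏ i, ((y i : ℝ) : ℂ) ^ σ i) y := by
        funext y
        by_cases hy : y ∈ Metric.ball c r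
        · rw [hF, Set.indicator_of_mem hy, Set.indicator_of_mem hy]
          rw [Complex.real_smul]
          push_cast
          rw [show (∏ x : Fin d, ((t:ℂ) * (y x : ℝ)) ^ σ x)
              = ∏ x : Fin d, ((t:ℂ) ^ σ x * ((y x : ℝ):ℂ) ^ σ x) from
            Finset.prod_congr rfl fun i _ => mul_pow _ _ _]
          rw [Finset.prod_mul_distrib, Finset.prod_pow_eq_pow_sum]
        · rw [hF, Set.indicator_of_notMem hy, Set.indicator_of_notMem hy, smul_zero]
      rw [this, integral_smul, smul_smul, ← pow_add]

lemma coeffs (s d : ℕ) : ∃ a : Fin (s+1) → ℝ, ∀ j : ℕ, j ≤ s →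
    ∑ k : Fin (s+1), a k * (((k : ℕ) + 1 : ℝ) / (2 * (s + 2))) ^ (d + j) = 1 := by
  set t : Fin (s+1) → ℝ := fun k => ((k : ℕ) + 1 : ℝ) / (2 * (s + 2)) with htdef
  have hden : (0:ℝ) < 2 * (s + 2) := by positivity
  have htpos : ∀ k, 0 < t k := fun k => by positivity
  have htinj : Function.Injective t := by
    intro k k' h
    simp only [htdef] at h; rw [div_left_inj' hden.ne', add_left_inj] at h
    exact Fin.ext (by exact_mod_cast h)
  set M : Matrix (Fin (s+1)) (Fin (s+1)) ℝ :=
    Matrix.of fun k j => t k ^ (d + (j : ℕ)) with hM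
  have hMdet : M.det ≠ 0 := by
    have : M = Matrix.diagonal (fun k => t k ^ d) * Matrix.vandermonde t := by
      ext k j
      simp [hM, Matrix.vandermonde, Matrix.diagonal_mul, pow_add]
    rw [this, Matrix.det_mul, Matrix.det_diagonal]
    refine mul_ne_zero (Finset.prod_ne_zero_iff.2 fun k _ => pow_ne_zero _ (htpos k).ne') ?_
    exact Matrix.det_vandermonde_ne_zero_iff.2 htinj
  have hunit : IsUnit M.det := isUnit_iff_ne_zero.2 hMdet
  refine ⟨fun k => Matrix.vecMul (fun _ => (1:ℝ)) M⁻¹ k, ?_⟩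
  intro j hj
  have key : Matrix.vecMul (Matrix.vecMul (fun _ => (1:ℝ)) M⁻¹) M = fun _ => (1:ℝ) := by
    rw [Matrix.vecMul_vecMul, Matrix.nonsing_inv_mul M hunit, Matrix.vecMul_one]
  have := congrFun key ⟨j, Nat.lt_succ_of_le hj⟩
  rw [Matrix.vecMul] at this
  simpa [dotProduct, hM, mul_comm] using this

theorem stmt6 (s d : ℕ) (hd : 0 < d) :
    ∃ f : EuclideanSpace ℝ (Fin d) → ℂ,
      Measurable f ∧ (∃ C : ℝ, ∀ x, ‖f x‖ ≤ C) ∧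
      (∀ x ∈ Metric.ball
          ((3 / 4 : ℝ) • EuclideanSpace.single (⟨0, hd⟩ : Fin d) (1 : ℝ)) (1 / 4), f x = 1) ∧
      (∀ x, x ∉ Metric.ball (0 : EuclideanSpace ℝ (Fin d)) (1 / 2) ∪
          Metric.ball ((3 / 4 : ℝ) • EuclideanSpace.single (⟨0, hd⟩ : Fin d) (1 : ℝ)) (1 / 4) →
        f x = 0) ∧
      ∀ σ : Fin d → ℕ, (∑ i, σ i) ≤ s →
        (∫ x : EuclideanSpace ℝ (Fin d), f x * ∏ i, ((x i : ℝ) : ℂ) ^ (σ i)) = 0 := by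
  obtain ⟨a, ha⟩ := coeffs s d
  set c : EuclideanSpace ℝ (Fin d) :=
    (3 / 4 : ℝ) • EuclideanSpace.single (⟨0, hd⟩ : Fin d) (1 : ℝ) with hc
  set t : Fin (s+1) → ℝ := fun k => ((k : ℕ) + 1 : ℝ) / (2 * (s + 2)) with htdef
  have htpos : ∀ k, 0 < t k := fun k => by positivity
  have hthalf : ∀ k, t k < 1 / 2 := by
    intro k
    rw [htdef, div_lt_iff₀ (by positivity)]
    have : ((k : ℕ) : ℝ) ≤ s := by exact_mod_cast Nat.lt_succ_iff.1 k.isLt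
    nlinarith
  have hnc : ‖c‖ = 3 / 4 := by
    rw [hc, norm_smul, EuclideanSpace.norm_single]
    norm_num
  have hsmall_norm : ∀ (k : Fin (s+1)) x, x ∈ Metric.ball (t k • c) (t k * (1 / 4)) →
      ‖x‖ < 1 / 2 := by
    intro k x hx
    rw [Metric.mem_ball, dist_eq_norm] at hx
    have h1 : ‖t k • c‖ = t k * (3 / 4) := by
      rw [norm_smul, Real.norm_eq_abs, abs_of_pos (htpos k), hnc]
    calc ‖x‖ ≤ ‖x - t k • c‖ + ‖t k • c‖ := by
          simpa using norm_add_le (x - t k • c) (t k • c)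
      _ < t k * (1 / 4) + t k * (3 / 4) := by linarith
      _ = t k := by ring
      _ < 1 / 2 := hthalf k
  have hdisj : ∀ (k : Fin (s+1)) x, x ∈ Metric.ball c (1 / 4) →
      x ∉ Metric.ball (t k • c) (t k * (1 / 4)) := by
    intro k x hx hx'
    rw [Metric.mem_ball, dist_eq_norm] at hx
    have h2 : ‖c‖ - ‖x - c‖ ≤ ‖x‖ := by
      have := norm_sub_norm_le c x
      have h3 : ‖c - x‖ = ‖x - c‖ := norm_sub_rev c x
      linarith
    have := hsmall_norm k x hx'
    rw [hnc] at h2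
    linarith
  refine ⟨fun x => Set.indicator (Metric.ball c (1/4)) (fun _ => (1:ℂ)) x
      - ∑ k : Fin (s+1), (a k : ℂ) *
          Set.indicator (Metric.ball (t k • c) (t k * (1/4))) (fun _ => (1:ℂ)) x,
    ?_, ?_, ?_, ?_, ?_⟩
  · exact (measurable_const.indicator Metric.isOpen_ball.measurableSet).sub
      (Finset.measurable_sum _ fun k _ =>
        (measurable_const.indicator Metric.isOpen_ball.measurableSet).const_mul _)
  · refine ⟨1 + ∑ k : Fin (s+1), |a k|, fun x => ?_⟩
    refine le_trans (norm_sub_le _ _) (add_le_add ?_ ?_)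
    · by_cases h : x ∈ Metric.ball c (1/4)
      · rw [Set.indicator_of_mem h]; simp
      · rw [Set.indicator_of_notMem h]; simp
    · refine le_trans (norm_sum_le _ _) (Finset.sum_le_sum fun k _ => ?_)
      rw [norm_mul, Complex.norm_real, Real.norm_eq_abs]
      by_cases h : x ∈ Metric.ball (t k • c) (t k * (1/4))
      · rw [Set.indicator_of_mem h]; simp
      · rw [Set.indicator_of_notMem h]; simp
  · intro x hx
    have h0 : ∀ k : Fin (s+1),
        Set.indicator (Metric.ball (t k • c) (t k * (1/4))) (fun _ => (1:ℂ)) x = 0 :=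
      fun k => Set.indicator_of_notMem (hdisj k x hx) _
    simp only [h0, Set.indicator_of_mem hx, mul_zero, Finset.sum_const_zero, sub_zero]
  · intro x hx
    rw [Set.mem_union, not_or] at hx
    have h0 : ∀ k : Fin (s+1),
        Set.indicator (Metric.ball (t k • c) (t k * (1/4))) (fun _ => (1:ℂ)) x = 0 := by
      intro k
      refine Set.indicator_of_notMem (fun h => hx.1 ?_) _
      rw [Metric.mem_ball, dist_zero_right]
      exact hsmall_norm k x h
    simp only [h0, Set.indicator_of_notMem hx.2, mul_zero, Finset.sum_const_zero, sub_zero]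
  · intro σ hσ
    set P : EuclideanSpace ℝ (Fin d) → ℂ := fun y => ∏ i, ((y i : ℝ) : ℂ) ^ σ i with hP
    have hPc : Continuous P := by
      refine continuous_finset_prod _ fun i _ => ?_
      exact (Complex.continuous_ofReal.comp ((continuous_apply i).comp (PiLp.continuous_ofLp 2 _))).pow _
    have hIb : ∀ (c' : EuclideanSpace ℝ (Fin d)) (r' : ℝ),
        Integrable (Set.indicator (Metric.ball c' r') P) := by
      intro c' r'
      rw [integrable_indicator_iff Metric.isOpen_ball.measurableSet]
      exact ((hPc.locallyIntegrable).integrableOn_isCompact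
        (isCompact_closedBall c' r')).mono_set Metric.ball_subset_closedBall
    have hpoint : ∀ x : EuclideanSpace ℝ (Fin d),
        (Set.indicator (Metric.ball c (1/4)) (fun _ => (1:ℂ)) x
          - ∑ k : Fin (s+1), (a k : ℂ) *
              Set.indicator (Metric.ball (t k • c) (t k * (1/4))) (fun _ => (1:ℂ)) x) * P x
        = Set.indicator (Metric.ball c (1/4)) P x
          - ∑ k : Fin (s+1), (a k : ℂ) *
              Set.indicator (Metric.ball (t k • c) (t k * (1/4))) P x := by
      intro x
      have hone : ∀ S : Set (EuclideanSpace ℝ (Fin d)),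
          Set.indicator S (fun _ => (1:ℂ)) x * P x = Set.indicator S P x := by
        intro S; by_cases h : x ∈ S <;> simp [h]
      rw [sub_mul, Finset.sum_mul, hone]
      congr 1
      exact Finset.sum_congr rfl fun k _ => by rw [mul_assoc, hone]
    calc (∫ x : EuclideanSpace ℝ (Fin d),
            (Set.indicator (Metric.ball c (1/4)) (fun _ => (1:ℂ)) x
              - ∑ k : Fin (s+1), (a k : ℂ) *
                  Set.indicator (Metric.ball (t k • c) (t k * (1/4))) (fun _ => (1:ℂ)) x)
            * ∏ i, ((x i : ℝ) : ℂ) ^ σ i)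
        = ∫ x : EuclideanSpace ℝ (Fin d),
            (Set.indicator (Metric.ball c (1/4)) P x
              - ∑ k : Fin (s+1), (a k : ℂ) *
                  Set.indicator (Metric.ball (t k • c) (t k * (1/4))) P x) := by
          exact integral_congr_ae (Filter.Eventually.of_forall fun x => hpoint x)
      _ = (∫ x, Set.indicator (Metric.ball c (1/4)) P x)
            - ∑ k : Fin (s+1), (a k : ℂ) *
                ∫ x, Set.indicator (Metric.ball (t k • c) (t k * (1/4))) P x := by
          rw [integral_sub (hIb c (1/4))
            (integrable_finset_sum _ fun k _ => (hIb _ _).const_mul _),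
            integral_finset_sum _ fun k _ => (hIb _ _).const_mul _]
          congr 1
          exact Finset.sum_congr rfl fun k _ => integral_const_mul _ _
      _ = 0 := by
          have hms : ∀ k : Fin (s+1),
              (∫ x, Set.indicator (Metric.ball (t k • c) (t k * (1/4))) P x)
                = ((t k) ^ (d + ∑ i, σ i) : ℝ) •
                  ∫ x, Set.indicator (Metric.ball c (1/4)) P x :=
            fun k => mom_scale c (1/4) σ (t k) (htpos k)
          set I : ℂ := ∫ x, Set.indicator (Metric.ball c (1/4)) P x with hI
          have hsum : ∑ k : Fin (s+1), (a k : ℂ) *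
              (((t k) ^ (d + ∑ i, σ i) : ℝ) • I) = I := by
            have h1 : ∀ k : Fin (s+1), (a k : ℂ) * (((t k) ^ (d + ∑ i, σ i) : ℝ) • I)
                = ((a k * (t k) ^ (d + ∑ i, σ i) : ℝ) : ℂ) * I := by
              intro k
              rw [Complex.real_smul]
              push_cast
              ring
            simp_rw [h1]
            rw [← Finset.sum_mul, ← Complex.ofReal_sum, ha (∑ i, σ i) hσ]
            simp
          simp_rw [hms]
          rw [hsum, sub_self]
end

section
/- Define f_n : ℝ → [0,∞) by f_n(x) = (1/n)·Σ_{i=1}^n (n²/2)·𝟙_{[i/n − n^{-2}, i/n + n^{-2}]}(x). Then ‖f_n‖_{L¹} = 1 for all n ≥ 2, the Lebesgue measure of the closed support of f_n tends to 0 as n → ∞, and for every continuous function g : ℝ → ℝ vanishing at infinity, ∫ f_n(x)·g(x) dx → ∫_0^1 g(x) dx as n → ∞. -/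
open MeasureTheory Filter

/-- The sequence `f_n(x) = (1/n) ∑_{i=1}^n (n²/2) 𝟙_{[i/n − n⁻², i/n + n⁻²]}(x)`. -/
noncomputable def fseq (n : ℕ) (x : ℝ) : ℝ :=
  (1 / (n : ℝ)) * ∑ i ∈ Finset.Icc 1 n, ((n : ℝ) ^ 2 / 2) *
    Set.indicator (Set.Icc ((i : ℝ) / n - ((n : ℝ) ^ 2)⁻¹) ((i : ℝ) / n + ((n : ℝ) ^ 2)⁻¹))
      (fun _ => (1 : ℝ)) x

lemma fseq_mul_eq (n : ℕ) (g : ℝ → ℝ) (x : ℝ) :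
    fseq n x * g x = ∑ i ∈ Finset.Icc 1 n, (1 / (n : ℝ) * ((n : ℝ) ^ 2 / 2)) *
      (Set.Icc ((i : ℝ) / n - ((n : ℝ) ^ 2)⁻¹) ((i : ℝ) / n + ((n : ℝ) ^ 2)⁻¹)).indicator g x := by
  unfold fseq
  rw [Finset.mul_sum, Finset.sum_mul]
  refine Finset.sum_congr rfl fun i _ => ?_
  by_cases h : x ∈ Set.Icc ((i : ℝ) / n - ((n : ℝ) ^ 2)⁻¹) ((i : ℝ) / n + ((n : ℝ) ^ 2)⁻¹) <;>
    simp [Set.indicator_apply, h] <;> ring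

lemma term_integrable (n : ℕ) (g : ℝ → ℝ) (hg : Continuous g) (c : ℝ) (a b : ℝ) :
    Integrable (fun x => c * (Set.Icc a b).indicator g x) := by
  exact ((hg.integrableOn_Icc).integrable_indicator measurableSet_Icc).const_mul c

lemma integral_fseq_mul (n : ℕ) (g : ℝ → ℝ) (hg : Continuous g) :
    ∫ x : ℝ, fseq n x * g x =
      ∑ i ∈ Finset.Icc 1 n, (1 / (n : ℝ) * ((n : ℝ) ^ 2 / 2)) *
        ∫ x in ((i : ℝ) / n - ((n : ℝ) ^ 2)⁻¹)..((i : ℝ) / n + ((n : ℝ) ^ 2)⁻¹), g x := by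
  have hr : (0 : ℝ) ≤ ((n : ℝ) ^ 2)⁻¹ := by positivity
  simp_rw [fseq_mul_eq n g]
  rw [integral_finset_sum _ (fun i _ => term_integrable n g hg _ _ _)]
  refine Finset.sum_congr rfl fun i _ => ?_
  rw [integral_const_mul, integral_indicator measurableSet_Icc, integral_Icc_eq_integral_Ioc,
    ← intervalIntegral.integral_of_le (by linarith)]

lemma fseq_nonneg (n : ℕ) (x : ℝ) : 0 ≤ fseq n x := by
  unfold fseq
  apply mul_nonneg (by positivity)
  refine Finset.sum_nonneg fun i _ => mul_nonneg (by positivity) ?_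
  exact Set.indicator_nonneg (fun _ _ => zero_le_one) x

lemma part1 (n : ℕ) (hn : 2 ≤ n) : ∫ x : ℝ, |fseq n x| = 1 := by
  have hn0 : (n : ℝ) ≠ 0 := Nat.cast_ne_zero.mpr (by omega)
  have h1 : ∀ x : ℝ, |fseq n x| = fseq n x * 1 := fun x => by
    rw [abs_of_nonneg (fseq_nonneg n x), mul_one]
  simp_rw [h1]
  rw [integral_fseq_mul n _ continuous_const]
  simp only [intervalIntegral.integral_const, smul_eq_mul, mul_one]
  have : ∀ i ∈ Finset.Icc 1 n, (1 / (n : ℝ) * ((n : ℝ) ^ 2 / 2)) *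
      (((i : ℝ) / n + ((n : ℝ) ^ 2)⁻¹) - ((i : ℝ) / n - ((n : ℝ) ^ 2)⁻¹)) = 1 / n := by
    intro i _
    field_simp
    ring
  rw [Finset.sum_congr rfl this, Finset.sum_const, Nat.card_Icc]
  simp
  field_simp

lemma support_subset (n : ℕ) :
    closure (Function.support (fseq n)) ⊆
      ⋃ i ∈ Finset.Icc 1 n, Set.Icc ((i : ℝ) / n - ((n : ℝ) ^ 2)⁻¹) ((i : ℝ) / n + ((n : ℝ) ^ 2)⁻¹) := by
  have hclosed : IsClosed (⋃ i ∈ Finset.Icc 1 n,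
      Set.Icc ((i : ℝ) / n - ((n : ℝ) ^ 2)⁻¹) ((i : ℝ) / n + ((n : ℝ) ^ 2)⁻¹)) :=
    Set.Finite.isClosed_biUnion (Finset.finite_toSet _) fun i _ => isClosed_Icc
  refine closure_minimal ?_ hclosed
  intro x hx
  unfold fseq Function.support at hx
  simp only [Set.mem_setOf_eq] at hx
  by_contra hmem
  apply hx
  rw [Set.mem_iUnion₂] at hmem
  push_neg at hmem
  have : ∀ i ∈ Finset.Icc 1 n, ((n : ℝ) ^ 2 / 2) *
      (Set.Icc ((i : ℝ) / n - ((n : ℝ) ^ 2)⁻¹) ((i : ℝ) / n + ((n : ℝ) ^ 2)⁻¹)).indicator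
        (fun _ => (1:ℝ)) x = 0 := by
    intro i hi
    rw [Set.indicator_of_notMem (hmem i hi), mul_zero]
  rw [Finset.sum_congr rfl this]
  simp

lemma part2 :
    Tendsto (fun n => volume (closure (Function.support (fseq n)))) atTop (nhds 0) := by
  have hle : ∀ n : ℕ, volume (closure (Function.support (fseq n))) ≤ ENNReal.ofReal (2 / n) := by
    intro n
    calc volume (closure (Function.support (fseq n)))
        ≤ volume (⋃ i ∈ Finset.Icc 1 n,
            Set.Icc ((i : ℝ) / n - ((n : ℝ) ^ 2)⁻¹) ((i : ℝ) / n + ((n : ℝ) ^ 2)⁻¹)) :=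
          measure_mono (support_subset n)
      _ ≤ ∑ i ∈ Finset.Icc 1 n, volume
            (Set.Icc ((i : ℝ) / n - ((n : ℝ) ^ 2)⁻¹) ((i : ℝ) / n + ((n : ℝ) ^ 2)⁻¹)) :=
          measure_biUnion_finset_le _ _
      _ ≤ ENNReal.ofReal (2 / n) := by
          rcases Nat.eq_zero_or_pos n with h | h
          · subst h; simp
          have hn0 : (n : ℝ) ≠ 0 := Nat.cast_ne_zero.mpr (by omega)
          have : ∀ i ∈ Finset.Icc 1 n, volume
              (Set.Icc ((i : ℝ) / n - ((n : ℝ) ^ 2)⁻¹) ((i : ℝ) / n + ((n : ℝ) ^ 2)⁻¹))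
              = ENNReal.ofReal (2 / n ^ 2) := by
            intro i _
            rw [Real.volume_Icc]
            congr 1
            ring
          rw [Finset.sum_congr rfl this, Finset.sum_const, Nat.card_Icc, Nat.add_sub_cancel,
            nsmul_eq_mul]
          rw [← ENNReal.ofReal_natCast n, ← ENNReal.ofReal_mul (by positivity)]
          apply ENNReal.ofReal_le_ofReal
          apply le_of_eq
          field_simp
  refine tendsto_of_tendsto_of_tendsto_of_le_of_le tendsto_const_nhds ?_ (fun n => zero_le) hle
  have : Tendsto (fun n : ℕ => (2 : ℝ) / n) atTop (nhds 0) := tendsto_const_div_atTop_nhds_zero_nat 2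
  simpa using ENNReal.tendsto_ofReal this

lemma term_bound (g : ℝ → ℝ) (a b c ε' : ℝ) (hab : a ≤ b) (hg : Continuous g)
    (hbound : ∀ x ∈ Set.Ioc a b, |g x - g c| ≤ ε') :
    |(∫ x in a..b, g x) - (b - a) * g c| ≤ ε' * (b - a) := by
  have e1 : (∫ x in a..b, g x) - (b - a) * g c = ∫ x in a..b, (g x - g c) := by
    rw [intervalIntegral.integral_sub (hg.intervalIntegrable a b) intervalIntegrable_const,
      intervalIntegral.integral_const, smul_eq_mul]
  rw [e1]
  have h2 : ∀ x ∈ Set.uIoc a b, ‖g x - g c‖ ≤ ε' := by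
    rw [Set.uIoc_of_le hab]
    simpa [Real.norm_eq_abs] using hbound
  calc |∫ x in a..b, (g x - g c)| = ‖∫ x in a..b, (g x - g c)‖ := (Real.norm_eq_abs _).symm
    _ ≤ ε' * |b - a| := intervalIntegral.norm_integral_le_of_norm_le_const h2
    _ = ε' * (b - a) := by rw [abs_of_nonneg (by linarith)]

lemma part3 (g : ℝ → ℝ) (hg : Continuous g) (hg0 : Tendsto g (cocompact ℝ) (nhds 0)) :
    Tendsto (fun n => ∫ x : ℝ, fseq n x * g x) atTop (nhds (∫ x in (0 : ℝ)..1, g x)) := by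
  have uc : UniformContinuous g := hg.uniformContinuous_of_tendsto_cocompact hg0
  rw [Metric.tendsto_atTop]
  intro ε hε
  obtain ⟨δ, hδ0, hδ⟩ := Metric.uniformContinuous_iff.mp uc (ε / 4) (by positivity)
  obtain ⟨N, hN⟩ := exists_nat_gt (1 / δ)
  refine ⟨max N 1, fun n hn => ?_⟩
  have hn1 : 1 ≤ n := le_trans (le_max_right N 1) hn
  have hn0 : (0 : ℝ) < n := by exact_mod_cast hn1
  have hnn0 : (n : ℝ) ≠ 0 := ne_of_gt hn0
  have hnN : (1 / δ : ℝ) < n := lt_of_lt_of_le hN (by exact_mod_cast le_trans (le_max_left N 1) hn)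
  have hnδ : (1 : ℝ) / n < δ := by
    rw [div_lt_iff₀ hn0]
    rw [div_lt_iff₀ hδ0] at hnN
    nlinarith
  set r : ℝ := ((n : ℝ) ^ 2)⁻¹ with hr_def
  have hr0 : (0 : ℝ) < r := by positivity
  have hr_le : r ≤ 1 / n := by
    rw [hr_def, one_div]
    apply inv_anti₀ hn0
    have hn1' : (1 : ℝ) ≤ n := by exact_mod_cast hn1
    nlinarith
  have hrδ : r < δ := lt_of_le_of_lt hr_le hnδ
  set C : ℝ := 1 / (n : ℝ) * ((n : ℝ) ^ 2 / 2) with hC_def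
  have hC0 : (0 : ℝ) ≤ C := by positivity
  have hC2r : C * (2 * r) = 1 / n := by rw [hC_def, hr_def]; field_simp
  -- decompose ∫₀¹ g into adjacent intervals
  have key1 : (∫ x in (0 : ℝ)..1, g x) =
      ∑ k ∈ Finset.range n, ∫ x in ((k : ℝ) / n)..(((k + 1 : ℕ) : ℝ) / n), g x := by
    rw [intervalIntegral.sum_integral_adjacent_intervals
      (a := fun k : ℕ => (k : ℝ) / n) (fun k _ => hg.intervalIntegrable _ _)]
    congr 1
    · simp
    · rw [div_self hnn0]
  have key2 : (∫ x : ℝ, fseq n x * g x) =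
      ∑ k ∈ Finset.range n, C *
        ∫ x in ((((k + 1 : ℕ)) : ℝ) / n - r)..((((k + 1 : ℕ)) : ℝ) / n + r), g x := by
    rw [integral_fseq_mul n g hg, ← Finset.Ico_add_one_right_eq_Icc, Finset.sum_Ico_eq_sum_range]
    exact Finset.sum_congr (by norm_num) fun k _ => by rw [Nat.add_comm]

  rw [Real.dist_eq, key1, key2, ← Finset.sum_sub_distrib]
  calc |∑ k ∈ Finset.range n,
        ((C * ∫ x in ((((k + 1 : ℕ)) : ℝ) / n - r)..((((k + 1 : ℕ)) : ℝ) / n + r), g x) -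
          ∫ x in ((k : ℝ) / n)..(((k + 1 : ℕ) : ℝ) / n), g x)|
      ≤ ∑ k ∈ Finset.range n,
        |(C * ∫ x in ((((k + 1 : ℕ)) : ℝ) / n - r)..((((k + 1 : ℕ)) : ℝ) / n + r), g x) -
          ∫ x in ((k : ℝ) / n)..(((k + 1 : ℕ) : ℝ) / n), g x| :=
        Finset.abs_sum_le_sum_abs _ _
    _ ≤ ∑ _k ∈ Finset.range n, ε / (2 * n) := by
        refine Finset.sum_le_sum fun k _ => ?_
        set c : ℝ := ((k + 1 : ℕ) : ℝ) / n with hc_def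
        have hlen : c - (k : ℝ) / n = 1 / n := by rw [hc_def]; push_cast; field_simp; ring
        -- first piece
        have hb1 : ∀ x ∈ Set.Ioc (c - r) (c + r), |g x - g c| ≤ ε / 4 := by
          intro x hx
          have : dist x c < δ := by
            rw [Real.dist_eq, abs_lt]
            exact ⟨by linarith [hx.1, hrδ], by linarith [hx.2, hrδ]⟩
          exact le_of_lt (hδ this)
        have h1 := term_bound g (c - r) (c + r) c (ε / 4) (by linarith) hg hb1
        have hlen1 : (c + r) - (c - r) = 2 * r := by ring
        rw [hlen1] at h1
        -- second piece
        have hb2 : ∀ x ∈ Set.Ioc ((k : ℝ) / n) c, |g x - g c| ≤ ε / 4 := by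
          intro x hx
          have hx1 : c - 1 / n < x := by rw [← hlen]; linarith [hx.1]
          have : dist x c < δ := by
            rw [Real.dist_eq, abs_lt]
            exact ⟨by linarith [hx1, hnδ], by linarith [hx.2, hδ0]⟩
          exact le_of_lt (hδ this)
        have h2 := term_bound g ((k : ℝ) / n) c c (ε / 4) (by rw [← sub_nonneg, hlen]; positivity)
          hg hb2
        rw [hlen] at h2
        -- combine
        have hcm : |C * (∫ x in (c - r)..(c + r), g x) - 1 / n * g c| ≤ C * (ε / 4 * (2 * r)) := by
          rw [← hC2r]
          have hfact : C * (∫ x in (c - r)..(c + r), g x) - C * (2 * r) * g c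
              = C * ((∫ x in (c - r)..(c + r), g x) - 2 * r * g c) := by ring
          rw [hfact, abs_mul, abs_of_nonneg hC0]
          exact mul_le_mul_of_nonneg_left h1 hC0
        have hfin : C * (ε / 4 * (2 * r)) = ε / 4 * (1 / n) := by
          rw [← hC2r]; ring
        rw [hfin] at hcm
        have hsplit : (C * ∫ x in (c - r)..(c + r), g x) - ∫ x in ((k : ℝ) / n)..c, g x
            = (C * (∫ x in (c - r)..(c + r), g x) - 1 / n * g c)
              - ((∫ x in ((k : ℝ) / n)..c, g x) - 1 / n * g c) := by ring
        rw [hsplit]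
        refine le_trans (abs_sub _ _) (le_trans (add_le_add hcm h2) (le_of_eq ?_))
        field_simp
        ring
    _ = n * (ε / (2 * n)) := by rw [Finset.sum_const, Finset.card_range, nsmul_eq_mul]
    _ < ε := by rw [mul_div_assoc']; rw [div_lt_iff₀ (by positivity)]; nlinarith

theorem stmt8 :
    (∀ n : ℕ, 2 ≤ n → ∫ x : ℝ, |fseq n x| = 1) ∧
    Tendsto (fun n => volume (closure (Function.support (fseq n)))) atTop (nhds 0) ∧
    ∀ g : ℝ → ℝ, Continuous g → Tendsto g (cocompact ℝ) (nhds 0) →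
      Tendsto (fun n => ∫ x : ℝ, fseq n x * g x) atTop (nhds (∫ x in (0 : ℝ)..1, g x)) := by
  exact ⟨part1, part2, part3⟩
end

section
/- Let P ∈ GL(d,ℝ) and r ∈ (0, ½]. Then for every y ∈ B(0, ‖P‖·r/2), the Lebesgue measure of B(y, ‖P‖·r) ∩ P·B(0,1) is at least (r/2)^d · m(P·B(0,1)) = (r/2)^d · |det P| · m(B(0,1)). -/
open Matrix MeasureTheory

/-- The operator norm of a matrix, induced by the Euclidean norm. -/
noncomputable def opNorm {d : ℕ} (M : Matrix (Fin d) (Fin d) ℝ) : ℝ :=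
  ‖Matrix.toEuclideanCLM (𝕜 := ℝ) M‖

theorem stmt17 {d : ℕ} (P : Matrix (Fin d) (Fin d) ℝ) (hP : IsUnit P)
    (r : ℝ) (hr : 0 < r) (hr' : r ≤ 1 / 2)
    (y : EuclideanSpace ℝ (Fin d)) (hy : ‖y‖ < opNorm P * r / 2) :
    ENNReal.ofReal ((r / 2) ^ d) *
        volume ((fun x : EuclideanSpace ℝ (Fin d) =>
          (WithLp.toLp 2 (P.mulVec x) : EuclideanSpace ℝ (Fin d))) '' Metric.ball 0 1) ≤
      volume (Metric.ball y (opNorm P * r) ∩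
        (fun x : EuclideanSpace ℝ (Fin d) =>
          (WithLp.toLp 2 (P.mulVec x) : EuclideanSpace ℝ (Fin d))) '' Metric.ball 0 1) ∧
    volume ((fun x : EuclideanSpace ℝ (Fin d) =>
        (WithLp.toLp 2 (P.mulVec x) : EuclideanSpace ℝ (Fin d))) '' Metric.ball 0 1) =
      ENNReal.ofReal |P.det| * volume (Metric.ball (0 : EuclideanSpace ℝ (Fin d)) 1) := by
  set f : EuclideanSpace ℝ (Fin d) →ₗ[ℝ] EuclideanSpace ℝ (Fin d) :=
    Matrix.toEuclideanLin P with hf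
  have hfim : (fun x : EuclideanSpace ℝ (Fin d) =>
      (WithLp.toLp 2 (P.mulVec x) : EuclideanSpace ℝ (Fin d))) = f := by
    funext x; rfl
  have hdet : LinearMap.det f = P.det := by
    rw [hf, Matrix.toEuclideanLin_eq_toLin, LinearMap.det_toLin]
  have himg : ∀ s : Set (EuclideanSpace ℝ (Fin d)),
      volume (f '' s) = ENNReal.ofReal |P.det| * volume s := by
    intro s
    rw [← hdet, Measure.addHaar_image_linearMap]
  rw [hfim]
  refine ⟨?_, himg _⟩
  -- handle d = 0 : contradiction from hy
  rcases Nat.eq_zero_or_pos d with hd | hd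
  · exfalso
    subst hd
    have hy0 : ‖y‖ = 0 := by
      rw [show y = 0 from Subsingleton.elim _ _]; simp
    have h0 : opNorm P = 0 := by
      refine le_antisymm ?_ (norm_nonneg _)
      refine ContinuousLinearMap.opNorm_le_bound _ le_rfl fun x => ?_
      rw [show (Matrix.toEuclideanCLM (𝕜 := ℝ) P) x = 0 from Subsingleton.elim _ _]
      simp
    rw [hy0, h0] at hy
    simp at hy
  haveI : Nonempty (Fin d) := ⟨⟨0, hd⟩⟩
  haveI : Nontrivial (EuclideanSpace ℝ (Fin d)) := inferInstance
  have hNr : (0:ℝ) < opNorm P * r / 2 := lt_of_le_of_lt (norm_nonneg y) hy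
  -- construct the center
  set c : EuclideanSpace ℝ (Fin d) := (WithLp.toLp 2 (P⁻¹.mulVec y) : EuclideanSpace ℝ (Fin d)) with hc
  have hPc : f c = y := by
    show (WithLp.toLp 2 (P.mulVec (P⁻¹.mulVec y)) : EuclideanSpace ℝ (Fin d)) = y
    rw [Matrix.mulVec_mulVec, Matrix.mul_nonsing_inv P ((Matrix.isUnit_iff_isUnit_det P).mp hP)]
    simp [Matrix.one_mulVec]
  set t : ℝ := (max 1 (2 * ‖c‖))⁻¹ with htdef
  have htpos : 0 < t := by
    apply inv_pos.mpr
    exact lt_of_lt_of_le one_pos (le_max_left _ _)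
  have ht1 : t ≤ 1 := by
    rw [htdef]
    exact inv_le_one_of_one_le₀ (le_max_left _ _)
  set c' : EuclideanSpace ℝ (Fin d) := t • c with hc'
  have hc'norm : ‖c'‖ ≤ 1 / 2 := by
    rw [hc', norm_smul, Real.norm_eq_abs, abs_of_pos htpos, htdef]
    rcases le_total (2 * ‖c‖) 1 with h | h
    · rw [max_eq_left h]
      simp
      linarith
    · rw [max_eq_right h]
      rw [inv_mul_le_iff₀ (by linarith : (0:ℝ) < 2 * ‖c‖)]
      linarith
  have hfc' : f c' = t • y := by rw [hc', _root_.map_smul, hPc]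
  have hfc'y : ‖f c' - y‖ < opNorm P * r / 2 := by
    rw [hfc']
    calc ‖t • y - y‖ = ‖(t - 1) • y‖ := by rw [sub_smul, one_smul]
      _ = |t - 1| * ‖y‖ := by rw [norm_smul, Real.norm_eq_abs]
      _ ≤ 1 * ‖y‖ := by
          apply mul_le_mul_of_nonneg_right _ (norm_nonneg y)
          rw [abs_sub_comm, abs_of_nonneg (by linarith)]
          linarith
      _ < opNorm P * r / 2 := by rw [one_mul]; exact hy
  -- the operator norm bound
  have hopbd : ∀ v : EuclideanSpace ℝ (Fin d), ‖f v‖ ≤ opNorm P * ‖v‖ := by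
    intro v
    have := (Matrix.toEuclideanCLM (𝕜 := ℝ) P).le_opNorm v
    exact this
  -- key inclusion
  have hsub : f '' Metric.ball c' (r / 2) ⊆
      Metric.ball y (opNorm P * r) ∩ f '' Metric.ball 0 1 := by
    rintro _ ⟨x, hx, rfl⟩
    rw [Metric.mem_ball, dist_eq_norm] at hx
    constructor
    · rw [Metric.mem_ball, dist_eq_norm]
      calc ‖f x - y‖ ≤ ‖f x - f c'‖ + ‖f c' - y‖ := norm_sub_le_norm_sub_add_norm_sub _ _ _
        _ = ‖f (x - c')‖ + ‖f c' - y‖ := by rw [map_sub]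
        _ ≤ opNorm P * ‖x - c'‖ + ‖f c' - y‖ := by
            exact add_le_add (hopbd _) le_rfl
        _ < opNorm P * (r / 2) + opNorm P * r / 2 := by
            apply add_lt_add_of_le_of_lt _ hfc'y
            apply mul_le_mul_of_nonneg_left (le_of_lt hx)
            nlinarith
        _ = opNorm P * r := by ring
    · refine ⟨x, ?_, rfl⟩
      rw [Metric.mem_ball, dist_zero_right]
      calc ‖x‖ ≤ ‖x - c'‖ + ‖c'‖ := by simpa using norm_add_le (x - c') c'
        _ < r / 2 + 1 / 2 := add_lt_add_of_lt_of_le hx hc'norm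
        _ ≤ 1 := by linarith
  have h1 : volume (f '' Metric.ball c' (r / 2)) =
      ENNReal.ofReal ((r / 2) ^ d) * volume (f '' Metric.ball 0 1) := by
    rw [himg, himg, Measure.addHaar_ball volume c' (by linarith : (0:ℝ) ≤ r / 2),
      finrank_euclideanSpace, Fintype.card_fin]
    ring
  exact le_trans (le_of_eq h1.symm) (measure_mono hsub)
end
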